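/- arXiv:2410.17962 — 2 statements merged into one kernel-verified Lean document; each statement's English description precedes it below -/
import Mathlib

section
/- Suppose for each v in [v̲, v̄] (with v̲ < v̄), H_v is the CDF of a probability distribution on ℝ with continuous strictly positive density h_v on the interval (V̲, V̄) (and H_v(x) = 0 for x ≤ V̲, H_v(x) = 1 for x ≥ V̄, when these bounds are finite); for each fixed V in (V̲, V̄), the map v ↦ H_v(V) is continuously differentiable with ∂H_v(V)/∂v < 0 for all v in [v̲, v̄]; and there exists an integrable function b : (V̲, V̄) → ℝ≥0 with |∂H_v(V)/∂v| ≤ b(V) for all v and V. If V̲ > −∞, then Assumptions A1 and A2 cannot both hold: it is impossible that (∂H_v(V)/∂v)/h_v(V) is weakly increasing in V over (V̲, V̄) for every v and weakly increasing in v over (v̲, v̄) for every V. -/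
/-!
Fix `V₀` in the support and `v₂` in the parameter interval, and put
`c = -(∂H_{v₂}(V₀)/∂v) / h_{v₂}(V₀) > 0`. A2 (in `v`) and A1 (in `V`) give
`∂H_u(t)/∂u ≤ -c h_u(t)` for all `u ≤ v₂` and `t ≤ V₀`: the distribution moves to the right at
speed at least `c` as the parameter grows. Lacking joint differentiability, we use this in
integrated form: along the line `y = w + c (v - v₁)` the quantity `∫_{Vlo}^{y} H_v` increases
between `v ≤ v'` by at most `(v' - v) ∫_y^{y'} b`, and summing over finer and finer subdivisions
shows it is antitone on `[v₁, v₂]`. Comparing its ends,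
`∫_{Vlo}^{Vlo + c (v₂ - v₁)} H_{v₂} ≤ ∫_{Vlo}^{w} H_{v₁} ≤ (w - Vlo) H_{v₁}(V₀)`, which tends to
`0` as `w → Vlo`, while the left side is positive. Mass near the finite endpoint `Vlo` has nowhere
to come from.
-/

open MeasureTheory Set

/-- The open interval `(a, b)` of real numbers, where the endpoints `a, b` are extended
reals (so `a = ⊥` means unbounded below and `b = ⊤` means unbounded above). -/
def ERIoo (a b : EReal) : Set ℝ := {x : ℝ | a < (x : EReal) ∧ (x : EReal) < b}

open Filter Topology
open scoped Interval

theorem antitoneOn_of_sub_le_mul_sub {Φ β : ℝ → ℝ} {s : Set ℝ} (hs : s.OrdConnected)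
    (hΦ : ∀ x ∈ s, ∀ y ∈ s, x ≤ y → Φ y - Φ x ≤ (y - x) * (β y - β x)) :
    AntitoneOn Φ s := by
  intro x hx y hy hxy
  -- telescope over `n + 1` equal steps from `x` to `y`
  have bound : ∀ n : ℕ, Φ y - Φ x ≤ (y - x) * (β y - β x) / (n + 1) := by
    intro n
    set d := (y - x) / (n + 1)
    have hd : 0 ≤ d := by positivity
    set p : ℕ → ℝ := fun k => x + k * d
    have hp : ∀ k ≤ n + 1, p k ∈ s := by
      intro k hk
      refine hs.out hx hy ⟨le_add_of_nonneg_right (by positivity), ?_⟩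
      have : (k : ℝ) * d ≤ (n + 1) * d := by gcongr; exact_mod_cast hk
      have : (n + 1 : ℝ) * d = y - x := by simp only [d]; field_simp
      simp only [p]; linarith
    have hp0 : p 0 = x := by simp [p]
    have hpn : p (n + 1) = y := by simp only [p, d]; push_cast; field_simp; ring
    calc Φ y - Φ x = ∑ k ∈ Finset.range (n + 1), (Φ (p (k + 1)) - Φ (p k)) := by
          rw [Finset.sum_range_sub (fun k => Φ (p k)), hp0, hpn]
      _ ≤ ∑ k ∈ Finset.range (n + 1), d * (β (p (k + 1)) - β (p k)) := by
          refine Finset.sum_le_sum fun k hk => ?_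
          have hk := Finset.mem_range.1 hk
          have := hΦ _ (hp k hk.le) _ (hp (k + 1) hk) (by simp only [p]; push_cast; linarith)
          simpa [p, add_mul] using this
      _ = (y - x) * (β y - β x) / (n + 1) := by
          rw [← Finset.mul_sum, Finset.sum_range_sub (fun k => β (p k)), hp0, hpn]; ring
  have hlim : Tendsto (fun n : ℕ => (y - x) * (β y - β x) / (n + 1)) atTop (𝓝 0) := by
    have := tendsto_one_div_add_atTop_nhds_zero_nat.const_mul ((y - x) * (β y - β x))
    rw [mul_zero] at this
    exact this.congr fun n => by ring
  linarith [ge_of_tendsto' hlim bound]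

theorem Monotone.intervalIntegral_le_mul {f : ℝ → ℝ} (hf : Monotone f) {x y : ℝ} (hxy : x ≤ y) :
    ∫ t in x..y, f t ≤ (y - x) * f y := by
  calc ∫ t in x..y, f t ≤ ∫ _ in x..y, f y :=
        intervalIntegral.integral_mono_on hxy (hf.intervalIntegrable) intervalIntegrable_const
          fun t ht => hf ht.2
    _ = (y - x) * f y := by simp

theorem image_sub_le_mul_sub_of_hasDerivAt_le {f f' : ℝ → ℝ} {x y C : ℝ} (hxy : x ≤ y)
    (hf : ∀ z ∈ Icc x y, HasDerivAt f (f' z) z) (hf' : ∀ z ∈ Icc x y, f' z ≤ C) :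
    f y - f x ≤ C * (y - x) :=
  (convex_Icc x y).image_sub_le_mul_sub_of_deriv_le
    (fun z hz => (hf z hz).continuousAt.continuousWithinAt)
    (fun z hz => (hf z (interior_subset hz)).differentiableAt.differentiableWithinAt)
    (fun z hz => (hf z (interior_subset hz)).deriv ▸ hf' z (interior_subset hz))
    x (left_mem_Icc.2 hxy) y (right_mem_Icc.2 hxy) hxy

theorem aestronglyMeasurable_of_hasDerivAt {α : Type*} [MeasurableSpace α] {μ : Measure α}
    {F : ℝ → α → ℝ} {F' : α → ℝ} {x₀ : ℝ}
    (hF : ∀ᶠ x in 𝓝 x₀, AEStronglyMeasurable (F x) μ)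
    (hF' : ∀ᵐ t ∂μ, HasDerivAt (F · t) (F' t) x₀) : AEStronglyMeasurable F' μ := by
  obtain ⟨u, hu⟩ := exists_seq_tendsto (𝓝[≠] x₀)
  obtain ⟨N, hN⟩ := eventually_atTop.1 (hu.eventually (eventually_nhdsWithin_of_eventually_nhds hF))
  refine aestronglyMeasurable_of_tendsto_ae atTop
    (f := fun n t => slope (F · t) x₀ (u (n + N))) (fun n => ?_) ?_
  · simp only [slope, vsub_eq_sub]
    exact ((hN _ le_add_self).sub hF.self_of_nhds).const_smul (u (n + N) - x₀)⁻¹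
  · filter_upwards [hF'] with t ht
    exact (hasDerivAt_iff_tendsto_slope.1 ht).comp ((tendsto_add_atTop_iff_nat N).2 hu)

theorem IntervalIntegrable.mono_of_mem_uIcc {f : ℝ → ℝ} {a b x y : ℝ}
    (hf : IntervalIntegrable f volume a b) (hx : x ∈ [[a, b]]) (hy : y ∈ [[a, b]]) :
    IntervalIntegrable f volume x y :=
  hf.mono_set (uIcc_subset_uIcc hx hy)

theorem hasDerivAt_intervalIntegral_of_dominated {F F' : ℝ → ℝ → ℝ} {bound : ℝ → ℝ}
    {s : Set ℝ} {x₀ a y : ℝ} (hs : s ∈ 𝓝 x₀)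
    (hF_meas : ∀ x ∈ s, AEStronglyMeasurable (F x) (volume.restrict (Ι a y)))
    (hF_int : IntervalIntegrable (F x₀) volume a y)
    (h_bound : ∀ x ∈ s, ∀ t ∈ Ι a y, |F' x t| ≤ bound t)
    (bound_integrable : IntervalIntegrable bound volume a y)
    (h_diff : ∀ x ∈ s, ∀ t ∈ Ι a y, HasDerivAt (F · t) (F' x t) x) :
    IntervalIntegrable (F' x₀) volume a y ∧
      HasDerivAt (fun x => ∫ t in a..y, F x t) (∫ t in a..y, F' x₀ t) x₀ := by
  have hF_meas' := eventually_of_mem hs hF_meas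
  refine intervalIntegral.hasDerivAt_integral_of_dominated_loc_of_deriv_le hs hF_meas' hF_int
    (aestronglyMeasurable_of_hasDerivAt hF_meas' ?_)
    (ae_of_all _ fun t ht x hx => h_bound x hx t ht)
    bound_integrable (ae_of_all _ fun t ht x hx => h_diff x hx t ht)
  exact (ae_restrict_iff' measurableSet_uIoc).2
    (ae_of_all _ fun t ht => h_diff x₀ (mem_of_mem_nhds hs) t ht)

structure IsDominatedCDFFamily (H h Hv : ℝ → ℝ → ℝ) (b : ℝ → ℝ) (s : Set ℝ) (a V₀ : ℝ) :
    Prop where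
  monotone : ∀ u ∈ s, Monotone (H u)
  eq_integral : ∀ u ∈ s, ∀ y ∈ Ioc a V₀, H u y = ∫ t in a..y, h u t
  density_pos : ∀ u ∈ s, ∀ t ∈ Ioc a V₀, 0 < h u t
  density_intervalIntegrable : ∀ u ∈ s, IntervalIntegrable (h u) volume a V₀
  hasDerivAt : ∀ u ∈ s, ∀ t ∈ Ioc a V₀, HasDerivAt (H · t) (Hv u t) u
  abs_deriv_le : ∀ u ∈ s, ∀ t ∈ Ioc a V₀, |Hv u t| ≤ b t
  bound_intervalIntegrable : IntervalIntegrable b volume a V₀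

namespace IsDominatedCDFFamily

theorem of_hasDerivWithinAt {H h Hv : ℝ → ℝ → ℝ} {b : ℝ → ℝ} {vlo vhi a V₀ : ℝ} {S : Set ℝ}
    (haV₀ : a ≤ V₀) (hS : Ioc a V₀ ⊆ S)
    (hh_pos : ∀ v ∈ Icc vlo vhi, ∀ t ∈ S, 0 < h v t)
    (hh_int : ∀ v ∈ Icc vlo vhi, IntegrableOn (h v) S)
    (hmono : ∀ v ∈ Icc vlo vhi, Monotone (H v))
    (hcdf : ∀ v ∈ Icc vlo vhi, ∀ x ∈ S, H v x = ∫ t in Ioc a x, h v t)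
    (hH_deriv : ∀ t ∈ S, ∀ v ∈ Icc vlo vhi,
      HasDerivWithinAt (H · t) (Hv v t) (Icc vlo vhi) v)
    (hb_int : IntegrableOn b S) (hb_dom : ∀ v ∈ Icc vlo vhi, ∀ t ∈ S, |Hv v t| ≤ b t) :
    IsDominatedCDFFamily H h Hv b (Ioo vlo vhi) a V₀ where
  monotone u hu := hmono u (Ioo_subset_Icc_self hu)
  eq_integral u hu y hy := by
    rw [hcdf u (Ioo_subset_Icc_self hu) y (hS hy), intervalIntegral.integral_of_le hy.1.le]
  density_pos u hu t ht := hh_pos u (Ioo_subset_Icc_self hu) t (hS ht)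
  density_intervalIntegrable u hu := (intervalIntegrable_iff_integrableOn_Ioc_of_le haV₀).2
    ((hh_int u (Ioo_subset_Icc_self hu)).mono_set hS)
  hasDerivAt u hu t ht :=
    (hH_deriv t (hS ht) u (Ioo_subset_Icc_self hu)).hasDerivAt (Icc_mem_nhds hu.1 hu.2)
  abs_deriv_le u hu t ht := hb_dom u (Ioo_subset_Icc_self hu) t (hS ht)
  bound_intervalIntegrable :=
    (intervalIntegrable_iff_integrableOn_Ioc_of_le haV₀).2 (hb_int.mono_set hS)

variable {H h Hv : ℝ → ℝ → ℝ} {b : ℝ → ℝ} {s : Set ℝ} {a V₀ c v₁ v₂ : ℝ}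

theorem pos (hF : IsDominatedCDFFamily H h Hv b s a V₀) {u y : ℝ} (hu : u ∈ s)
    (hy : y ∈ Ioc a V₀) : 0 < H u y := by
  rw [hF.eq_integral u hu y hy]
  exact intervalIntegral.intervalIntegral_pos_of_pos_on
    ((hF.density_intervalIntegrable u hu).mono_of_mem_uIcc left_mem_uIcc
      (Icc_subset_uIcc (Ioc_subset_Icc_self hy)))
    (fun t ht => hF.density_pos u hu t ⟨ht.1, ht.2.le.trans hy.2⟩) hy.1

theorem hasDerivAt_intervalIntegral (hF : IsDominatedCDFFamily H h Hv b s a V₀)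
    (hs : IsOpen s) {u y : ℝ} (hu : u ∈ s) (hy : y ∈ Ioc a V₀) :
    IntervalIntegrable (Hv u) volume a y ∧
      HasDerivAt (fun v => ∫ t in a..y, H v t) (∫ t in a..y, Hv u t) u := by
  have hsub : Ι a y ⊆ Ioc a V₀ := by
    rw [uIoc_of_le hy.1.le]; exact Ioc_subset_Ioc_right hy.2
  exact hasDerivAt_intervalIntegral_of_dominated (hs.mem_nhds hu)
    (fun x hx => (hF.monotone x hx).measurable.aestronglyMeasurable)
    (hF.monotone u hu).intervalIntegrable
    (fun x hx t ht => hF.abs_deriv_le x hx t (hsub ht))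
    (hF.bound_intervalIntegrable.mono_of_mem_uIcc left_mem_uIcc
      (Icc_subset_uIcc (Ioc_subset_Icc_self hy)))
    (fun x hx t ht => hF.hasDerivAt x hx t (hsub ht))

theorem intervalIntegral_sub_le (hF : IsDominatedCDFFamily H h Hv b s a V₀) (hs : IsOpen s)
    (hsub : Icc v₁ v₂ ⊆ s) (hc : 0 ≤ c)
    (hkey : ∀ u ∈ Icc v₁ v₂, ∀ t ∈ Ioc a V₀, Hv u t ≤ -c * h u t)
    {y v v' : ℝ} (hy : y ∈ Ioc a V₀) (hv : v ∈ Icc v₁ v₂) (hv' : v' ∈ Icc v₁ v₂) (hvv' : v ≤ v') :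
    (∫ t in a..y, H v' t) - ∫ t in a..y, H v t ≤ -c * H v' y * (v' - v) := by
  have hsub' : Icc v v' ⊆ Icc v₁ v₂ := Icc_subset_Icc hv.1 hv'.2
  have hHanti : ∀ u ∈ Icc v v', H v' y ≤ H u y := by
    intro u hu
    have hmem : ∀ z ∈ Icc u v', z ∈ Icc v₁ v₂ := fun z hz => hsub' ⟨hu.1.trans hz.1, hz.2⟩
    have hderiv_nonpos : ∀ z ∈ Icc u v', Hv z y ≤ 0 := fun z hz => by
      nlinarith [hkey z (hmem z hz) y hy, hF.density_pos z (hsub (hmem z hz)) y hy]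
    have := image_sub_le_mul_sub_of_hasDerivAt_le hu.2
      (fun z hz => hF.hasDerivAt z (hsub (hmem z hz)) y hy) hderiv_nonpos
    linarith
  refine image_sub_le_mul_sub_of_hasDerivAt_le hvv'
    (fun u hu => (hF.hasDerivAt_intervalIntegral hs (hsub (hsub' hu)) hy).2) fun u hu => ?_
  have hus := hsub (hsub' hu)
  calc ∫ t in a..y, Hv u t ≤ ∫ t in a..y, -c * h u t :=
        intervalIntegral.integral_mono_on_of_le_Ioo hy.1.le
          (hF.hasDerivAt_intervalIntegral hs hus hy).1
          (((hF.density_intervalIntegrable u hus).mono_of_mem_uIcc left_mem_uIcc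
            (Icc_subset_uIcc (Ioc_subset_Icc_self hy))).const_mul _)
          fun t ht => hkey u (hsub' hu) t ⟨ht.1, ht.2.le.trans hy.2⟩
    _ = -c * H u y := by rw [intervalIntegral.integral_const_mul, hF.eq_integral u hus y hy]
    _ ≤ -c * H v' y := mul_le_mul_of_nonpos_left (hHanti u hu) (neg_nonpos.2 hc)

theorem intervalIntegral_sub_le_along_line (hF : IsDominatedCDFFamily H h Hv b s a V₀)
    (hs : IsOpen s) (hsub : Icc v₁ v₂ ⊆ s) (hc : 0 ≤ c)
    (hkey : ∀ u ∈ Icc v₁ v₂, ∀ t ∈ Ioc a V₀, Hv u t ≤ -c * h u t)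
    {y y' v v' : ℝ} (hy : y ∈ Ioc a V₀) (hy' : y' ∈ Ioc a V₀) (hyy' : y' - y = c * (v' - v))
    (hv : v ∈ Icc v₁ v₂) (hv' : v' ∈ Icc v₁ v₂) (hvv' : v ≤ v') :
    (∫ t in a..y', H v' t) - ∫ t in a..y, H v t ≤ (v' - v) * ∫ t in y..y', b t := by
  have hyy'_le : y ≤ y' := by nlinarith
  have hmem : ∀ {x}, x ∈ Ioc a V₀ → x ∈ [[a, V₀]] := fun hx =>
    Icc_subset_uIcc (Ioc_subset_Icc_self hx)
  have hH : ∀ x x', IntervalIntegrable (H v') volume x x' := fun _ _ =>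
    (hF.monotone v' (hsub hv')).intervalIntegrable
  have hh := hF.density_intervalIntegrable v' (hsub hv')
  have hch : ∀ t ∈ Ioo y y', c * h v' t ≤ b t := fun t ht => by
    have ht' : t ∈ Ioc a V₀ := ⟨hy.1.trans ht.1, ht.2.le.trans hy'.2⟩
    linarith [hkey v' hv' t ht', neg_le_abs (Hv v' t), hF.abs_deriv_le v' (hsub hv') t ht']
  -- the gain `c (v' - v) H_{v'}(y')` from moving the endpoint is paid for by the loss from
  -- moving the parameter, up to `c (v' - v)` times the `h`-mass of `(y, y']`
  calc (∫ t in a..y', H v' t) - ∫ t in a..y, H v t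
      = (∫ t in y..y', H v' t) + ((∫ t in a..y, H v' t) - ∫ t in a..y, H v t) := by
        rw [← intervalIntegral.integral_interval_sub_left (hH a y') (hH a y)]; ring
    _ ≤ (y' - y) * H v' y' + -c * H v' y * (v' - v) :=
        add_le_add ((hF.monotone v' (hsub hv')).intervalIntegral_le_mul hyy'_le)
          (hF.intervalIntegral_sub_le hs hsub hc hkey hy hv hv' hvv')
    _ = (v' - v) * (c * (H v' y' - H v' y)) := by rw [hyy']; ring
    _ = (v' - v) * ∫ t in y..y', c * h v' t := by
        rw [hF.eq_integral v' (hsub hv') y' hy', hF.eq_integral v' (hsub hv') y hy,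
          intervalIntegral.integral_interval_sub_left (hh.mono_of_mem_uIcc left_mem_uIcc (hmem hy'))
            (hh.mono_of_mem_uIcc left_mem_uIcc (hmem hy)), intervalIntegral.integral_const_mul]
    _ ≤ (v' - v) * ∫ t in y..y', b t :=
        mul_le_mul_of_nonneg_left (intervalIntegral.integral_mono_on_of_le_Ioo hyy'_le
          ((hh.mono_of_mem_uIcc (hmem hy) (hmem hy')).const_mul c)
          (hF.bound_intervalIntegrable.mono_of_mem_uIcc (hmem hy) (hmem hy')) hch)
          (sub_nonneg.2 hvv')

theorem antitoneOn_intervalIntegral_along_line (hF : IsDominatedCDFFamily H h Hv b s a V₀)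
    (hs : IsOpen s) (hsub : Icc v₁ v₂ ⊆ s) (hc : 0 ≤ c)
    (hkey : ∀ u ∈ Icc v₁ v₂, ∀ t ∈ Ioc a V₀, Hv u t ≤ -c * h u t)
    {w : ℝ} (hw : a < w) (hw' : w + c * (v₂ - v₁) ≤ V₀) :
    AntitoneOn (fun v => ∫ t in a..(w + c * (v - v₁)), H v t) (Icc v₁ v₂) := by
  set y : ℝ → ℝ := fun v => w + c * (v - v₁)
  have hy : ∀ v ∈ Icc v₁ v₂, y v ∈ Ioc a V₀ := fun v hv =>
    ⟨by nlinarith [hv.1], by nlinarith [hv.2]⟩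
  have hb_int : ∀ v ∈ Icc v₁ v₂, IntervalIntegrable b volume a (y v) := fun v hv =>
    hF.bound_intervalIntegrable.mono_of_mem_uIcc left_mem_uIcc
      (Icc_subset_uIcc (Ioc_subset_Icc_self (hy v hv)))
  refine antitoneOn_of_sub_le_mul_sub ordConnected_Icc
    (β := fun v => ∫ t in a..y v, b t) fun v hv v' hv' hvv' => ?_
  rw [intervalIntegral.integral_interval_sub_left (hb_int v' hv') (hb_int v hv)]
  exact hF.intervalIntegral_sub_le_along_line hs hsub hc hkey (hy v hv) (hy v' hv')
    (by ring) hv hv' hvv'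

theorem not_forall_deriv_le_neg_mul_density (hF : IsDominatedCDFFamily H h Hv b s a V₀)
    (hs : IsOpen s) (hsub : Icc v₁ v₂ ⊆ s) (hv : v₁ < v₂) (hc : 0 < c)
    (hroom : a + c * (v₂ - v₁) < V₀) :
    ¬ ∀ u ∈ Icc v₁ v₂, ∀ t ∈ Ioc a V₀, Hv u t ≤ -c * h u t := by
  intro hkey
  set ρ := c * (v₂ - v₁)
  have hρ : 0 < ρ := mul_pos hc (sub_pos.2 hv)
  have hv₁ : v₁ ∈ Icc v₁ v₂ := left_mem_Icc.2 hv.le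
  have hv₂ : v₂ ∈ Icc v₁ v₂ := right_mem_Icc.2 hv.le
  have hmass_pos : 0 < ∫ t in a..(a + ρ), H v₂ t :=
    intervalIntegral.intervalIntegral_pos_of_pos_on (hF.monotone v₂ (hsub hv₂)).intervalIntegrable
      (fun t ht => hF.pos (hsub hv₂) ⟨ht.1, by linarith [ht.2]⟩) (by linarith)
  have hbound : ∀ w ∈ Ioo a (V₀ - ρ), ∫ t in a..(a + ρ), H v₂ t ≤ (w - a) * H v₁ V₀ := by
    intro w hw
    have hline := hF.antitoneOn_intervalIntegral_along_line hs hsub hc.le hkey hw.1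
      (by linarith [hw.2]) hv₁ hv₂ hv.le
    simp only [sub_self, mul_zero, add_zero] at hline
    calc ∫ t in a..(a + ρ), H v₂ t ≤ ∫ t in a..(w + ρ), H v₂ t :=
          intervalIntegral.integral_mono_interval le_rfl (by linarith) (by linarith [hw.1])
            ((ae_restrict_iff' measurableSet_Ioc).2 (ae_of_all _ fun t ht =>
              (hF.pos (hsub hv₂) ⟨ht.1, by linarith [ht.2, hw.2]⟩).le))
            (hF.monotone v₂ (hsub hv₂)).intervalIntegrable
      _ ≤ ∫ t in a..w, H v₁ t := hline
      _ ≤ (w - a) * H v₁ w := (hF.monotone v₁ (hsub hv₁)).intervalIntegral_le_mul hw.1.le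
      _ ≤ (w - a) * H v₁ V₀ := by
          gcongr
          · linarith [hw.1]
          · exact hF.monotone v₁ (hsub hv₁) (by linarith [hw.2])
  have hlim : Tendsto (fun w => (w - a) * H v₁ V₀) (𝓝[>] a) (𝓝 0) := by
    have : Tendsto (fun w => (w - a) * H v₁ V₀) (𝓝 a) (𝓝 ((a - a) * H v₁ V₀)) :=
      ((continuous_id.sub continuous_const).mul continuous_const).tendsto a
    rw [sub_self, zero_mul] at this
    exact this.mono_left nhdsWithin_le_nhds
  have := ge_of_tendsto hlim (eventually_of_mem (Ioo_mem_nhdsGT (by linarith)) hbound)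
  linarith

end IsDominatedCDFFamily

theorem stmt_4_general
    (vlo vhi : ℝ) (hv : vlo < vhi)
    (Vlo : ℝ) (Vhi : EReal) (hV : (Vlo : EReal) < Vhi)
    (H h Hv : ℝ → ℝ → ℝ)
    -- `h v` is a continuous strictly positive density on `(Vlo, Vhi)`
    (hh_pos : ∀ v ∈ Icc vlo vhi, ∀ V ∈ ERIoo Vlo Vhi, 0 < h v V)
    (hh_int : ∀ v ∈ Icc vlo vhi, IntegrableOn (h v) (ERIoo Vlo Vhi))
    -- `H v` is the corresponding CDF of a probability distribution
    (hmono : ∀ v ∈ Icc vlo vhi, Monotone (H v))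
    (hcdf : ∀ v ∈ Icc vlo vhi, ∀ x ∈ ERIoo Vlo Vhi, H v x = ∫ t in Ioc Vlo x, h v t)
    -- `v ↦ H v V` is continuously differentiable, strictly decreasing in `v`
    (hH_deriv : ∀ V ∈ ERIoo Vlo Vhi, ∀ v ∈ Icc vlo vhi,
      HasDerivWithinAt (fun v => H v V) (Hv v V) (Icc vlo vhi) v)
    (hHv_neg : ∀ v ∈ Icc vlo vhi, ∀ V ∈ ERIoo Vlo Vhi, Hv v V < 0)
    -- dominating integrable function
    (b : ℝ → ℝ)
    (hb_int : IntegrableOn b (ERIoo Vlo Vhi))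
    (hb_dom : ∀ v ∈ Icc vlo vhi, ∀ V ∈ ERIoo Vlo Vhi, |Hv v V| ≤ b V) :
    ¬ ((∀ v ∈ Icc vlo vhi, MonotoneOn (fun V => Hv v V / h v V) (ERIoo Vlo Vhi)) ∧
        (∀ V ∈ ERIoo Vlo Vhi, MonotoneOn (fun v => Hv v V / h v V) (Ioo vlo vhi))) := by
  rintro ⟨hA1, hA2⟩
  obtain ⟨V₀, hVlo, hVhi⟩ := EReal.lt_iff_exists_real_btwn.1 hV
  have hVlo : Vlo < V₀ := EReal.coe_lt_coe_iff.1 hVlo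
  have hsub : Ioc Vlo V₀ ⊆ ERIoo Vlo Vhi := fun t ht =>
    ⟨EReal.coe_lt_coe_iff.2 ht.1, (EReal.coe_le_coe_iff.2 ht.2).trans_lt hVhi⟩
  have hV₀ : V₀ ∈ ERIoo Vlo Vhi := hsub (right_mem_Ioc.2 hVlo)
  have hF := IsDominatedCDFFamily.of_hasDerivWithinAt hVlo.le hsub hh_pos hh_int hmono hcdf
    hH_deriv hb_int hb_dom
  obtain ⟨v₂, hv₂⟩ : (Ioo vlo vhi).Nonempty := nonempty_Ioo.2 hv
  have hv₂' : v₂ ∈ Icc vlo vhi := Ioo_subset_Icc_self hv₂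
  set c := -(Hv v₂ V₀ / h v₂ V₀)
  have hc : 0 < c :=
    neg_pos.2 (div_neg_of_neg_of_pos (hHv_neg v₂ hv₂' V₀ hV₀) (hh_pos v₂ hv₂' V₀ hV₀))
  have hnear : ∀ᶠ v₁ in 𝓝[<] v₂, v₁ ∈ Ioo vlo v₂ ∧ Vlo + c * (v₂ - v₁) < V₀ :=
    Filter.Eventually.and (Ioo_mem_nhdsLT hv₂.1) <| nhdsWithin_le_nhds <|
      (by fun_prop : Continuous fun v₁ => Vlo + c * (v₂ - v₁)).continuousAt.eventually_lt
        continuousAt_const (by simpa using hVlo)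
  obtain ⟨v₁, ⟨hv₁, hv₁₂⟩, hroom⟩ := hnear.exists
  have hIcc : Icc v₁ v₂ ⊆ Ioo vlo vhi := Icc_subset_Ioo hv₁ hv₂.2
  refine hF.not_forall_deriv_le_neg_mul_density isOpen_Ioo hIcc hv₁₂ hc hroom fun u hu t ht => ?_
  have hratio : Hv u t / h u t ≤ -c :=
    (hA2 t (hsub ht) (hIcc hu) hv₂ hu.2).trans (by simpa [c] using hA1 v₂ hv₂' (hsub ht) hV₀ ht.2)
  exact (div_le_iff₀ (hh_pos u (Ioo_subset_Icc_self (hIcc hu)) t (hsub ht))).1 hratio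

/-- **Proposition 2 (Impossibility of lower bounded support).**
For each `v ∈ [vlo, vhi]`, let `H v` be the CDF of a probability distribution with
continuous strictly positive density `h v` on `(Vlo, Vhi)`, where the lower endpoint
`Vlo` is finite (`Vlo > -∞`); for each fixed `V ∈ (Vlo, Vhi)` the map `v ↦ H v V` is
continuously differentiable with derivative `Hv v V < 0`, and the partial derivatives are
dominated by an integrable function `b`.  Then Assumptions A1 and A2 cannot both hold:
it is impossible that `(∂H_v(V)/∂v)/h_v(V)` is weakly increasing in `V` over `(Vlo, Vhi)`
for every `v` and weakly increasing in `v` over `(vlo, vhi)` for every `V`. -/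
theorem stmt_4
    (vlo vhi : ℝ) (hv : vlo < vhi)
    (Vlo : ℝ) (Vhi : EReal) (hV : (Vlo : EReal) < Vhi)
    (H h Hv : ℝ → ℝ → ℝ)
    -- `h v` is a continuous strictly positive density on `(Vlo, Vhi)`
    (hh_cont : ∀ v ∈ Icc vlo vhi, ContinuousOn (h v) (ERIoo Vlo Vhi))
    (hh_pos : ∀ v ∈ Icc vlo vhi, ∀ V ∈ ERIoo Vlo Vhi, 0 < h v V)
    (hh_int : ∀ v ∈ Icc vlo vhi, IntegrableOn (h v) (ERIoo Vlo Vhi))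
    -- `H v` is the corresponding CDF of a probability distribution
    (hmono : ∀ v ∈ Icc vlo vhi, Monotone (H v))
    (hcdf : ∀ v ∈ Icc vlo vhi, ∀ x ∈ ERIoo Vlo Vhi, H v x = ∫ t in Ioc Vlo x, h v t)
    (hzero : ∀ v ∈ Icc vlo vhi, ∀ x : ℝ, x ≤ Vlo → H v x = 0)
    (hone : ∀ v ∈ Icc vlo vhi, ∀ x : ℝ, Vhi ≤ (x : EReal) → H v x = 1)
    (hmass : ∀ v ∈ Icc vlo vhi, ∫ t in ERIoo Vlo Vhi, h v t = 1)
    -- `v ↦ H v V` is continuously differentiable, strictly decreasing in `v`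
    (hH_deriv : ∀ V ∈ ERIoo Vlo Vhi, ∀ v ∈ Icc vlo vhi,
      HasDerivWithinAt (fun v => H v V) (Hv v V) (Icc vlo vhi) v)
    (hHv_cont : ∀ V ∈ ERIoo Vlo Vhi, ContinuousOn (fun v => Hv v V) (Icc vlo vhi))
    (hHv_neg : ∀ v ∈ Icc vlo vhi, ∀ V ∈ ERIoo Vlo Vhi, Hv v V < 0)
    -- dominating integrable function
    (b : ℝ → ℝ)
    (hb_nonneg : ∀ V ∈ ERIoo Vlo Vhi, 0 ≤ b V)
    (hb_int : IntegrableOn b (ERIoo Vlo Vhi))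
    (hb_dom : ∀ v ∈ Icc vlo vhi, ∀ V ∈ ERIoo Vlo Vhi, |Hv v V| ≤ b V) :
    ¬ ((∀ v ∈ Icc vlo vhi, MonotoneOn (fun V => Hv v V / h v V) (ERIoo Vlo Vhi)) ∧
        (∀ V ∈ ERIoo Vlo Vhi, MonotoneOn (fun v => Hv v V / h v V) (Ioo vlo vhi))) :=
  stmt_4_general vlo vhi hv Vlo Vhi hV H h Hv hh_pos hh_int hmono hcdf hH_deriv hHv_neg b hb_int
    hb_dom
end

section
/- Let V̲ be a real number, V₀ > V̲, and a < b real numbers with b − a < V₀ − V̲. Suppose for each v in [a, b], H_v : ℝ → ℝ is a continuous weakly increasing function with H_v(x) = 0 for x ≤ V̲ and H_v(x) > 0 for x > V̲, such that H_v(x) = ∫_{V̲}^{x} h_v(s) ds for x in (V̲, V₀) where h_v is continuous and strictly positive on (V̲, V₀), and for each fixed V in (V̲, V₀) the map v ↦ H_v(V) is continuously differentiable on (a, b). Then it cannot hold that ∂H_v(V)/∂v + h_v(V) < 0 for all v in (a, b) and all V in (V̲, V₀); that is, no such family with −(∂H_v(V)/∂v)/h_v(V) > 1 throughout this region exists. 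-/
/-!
If `∂H_v/∂v + h_v < 0`, then `H` decreases along the diagonals `s ↦ (v + s, V + s)`. Since `H` is
only known to be separately differentiable, this is used in integrated form: integrating `h` over
the triangle `{v₁ < u < v₂, A < t < A + (u - v₁)}` in both orders (Tonelli; `h` is jointly
measurable as the `x`-derivative of the jointly continuous `H`) gives, with `d = v₂ - v₁`,
`∫_A^{A+d} H_{v₂} ≤ ∫_{v₁}^{v₂} H_u(A) ≤ d H_{v₁}(A)`. Letting `A ↓ V̲` the right side tends to
`0`, while by monotonicity the left side stays above `∫_{V̲}^{V̲+d} H_{v₂} > 0`; the assumption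
`b - a < V₀ - V̲` is what leaves room for `A + d < V₀`.
-/

open MeasureTheory Set Filter Topology Function
open scoped ENNReal

theorem continuousAt_uncurry_of_monotone {α β γ : Type*} [TopologicalSpace α]
    [LinearOrder β] [TopologicalSpace β] [OrderTopology β] [DenselyOrdered β]
    [NoMinOrder β] [NoMaxOrder β] [LinearOrder γ] [TopologicalSpace γ] [OrderTopology γ]
    {f : α → β → γ} {v : α} {x : β} (hmono : ∀ᶠ u in 𝓝 v, Monotone (f u))
    (hx : ContinuousAt (f v) x) (hv : ∀ᶠ y in 𝓝 x, ContinuousAt (fun u => f u y) v) :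
    ContinuousAt (uncurry f) (v, x) := by
  refine tendsto_order.2 ⟨fun c hc => ?_, fun c hc => ?_⟩
  · obtain ⟨y, ⟨hyc, hyv⟩, hyx⟩ := (((hx.eventually (lt_mem_nhds hc)).and hv).filter_mono
      nhdsWithin_le_nhds |>.and (self_mem_nhdsWithin (s := Iio x))).exists
    have hu : ∀ᶠ u in 𝓝 v, c < f u y ∧ Monotone (f u) :=
      (hyv.eventually (lt_mem_nhds hyc)).and hmono
    rw [nhds_prod_eq]
    filter_upwards [hu.prod_mk (Ioi_mem_nhds hyx)] with p ⟨⟨hcy, hm⟩, hp⟩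
    exact hcy.trans_le (hm hp.le)
  · obtain ⟨y, ⟨hyc, hyv⟩, hyx⟩ := (((hx.eventually (gt_mem_nhds hc)).and hv).filter_mono
      nhdsWithin_le_nhds |>.and (self_mem_nhdsWithin (s := Ioi x))).exists
    have hu : ∀ᶠ u in 𝓝 v, f u y < c ∧ Monotone (f u) :=
      (hyv.eventually (gt_mem_nhds hyc)).and hmono
    rw [nhds_prod_eq]
    filter_upwards [hu.prod_mk (Iio_mem_nhds hyx)] with p ⟨⟨hcy, hm⟩, hp⟩
    exact (hm hp.le).trans_lt hcy

theorem hasDerivAt_of_eq_setIntegral_Ioc {F f : ℝ → ℝ} {c d x : ℝ}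
    (hF : ∀ y ∈ Ioo c d, F y = ∫ t in Ioc c y, f t) (hint : IntegrableOn f (Ioc c x))
    (hf : ContinuousOn f (Ioo c d)) (hx : x ∈ Ioo c d) : HasDerivAt F (f x) x := by
  have hderiv := intervalIntegral.integral_hasDerivAt_right
    ((intervalIntegrable_iff_integrableOn_Ioc_of_le hx.1.le).2 hint)
    (hf.stronglyMeasurableAtFilter isOpen_Ioo x hx) (hf.continuousAt (isOpen_Ioo.mem_nhds hx))
  refine hderiv.congr_of_eventuallyEq ?_
  filter_upwards [isOpen_Ioo.mem_nhds hx] with y hy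
  rw [hF y hy, intervalIntegral.integral_of_le hy.1.le]

theorem monotoneOn_Icc_of_hasDerivAt_nonneg {g g' : ℝ → ℝ} {a b : ℝ}
    (hg : ContinuousOn g (Icc a b)) (hderiv : ∀ x ∈ Ioo a b, HasDerivAt g (g' x) x)
    (hg' : ∀ x ∈ Ioo a b, 0 ≤ g' x) : MonotoneOn g (Icc a b) :=
  monotoneOn_of_hasDerivWithinAt_nonneg (convex_Icc a b) hg
    (by simpa only [interior_Icc] using fun x hx => (hderiv x hx).hasDerivWithinAt)
    (by simpa only [interior_Icc] using hg')

theorem antitoneOn_Icc_of_hasDerivAt_nonpos {g g' : ℝ → ℝ} {a b : ℝ}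
    (hg : ContinuousOn g (Icc a b)) (hderiv : ∀ x ∈ Ioo a b, HasDerivAt g (g' x) x)
    (hg' : ∀ x ∈ Ioo a b, g' x ≤ 0) : AntitoneOn g (Icc a b) :=
  antitoneOn_of_hasDerivWithinAt_nonpos (convex_Icc a b) hg
    (by simpa only [interior_Icc] using fun x hx => (hderiv x hx).hasDerivWithinAt)
    (by simpa only [interior_Icc] using hg')

theorem AntitoneOn.intervalIntegral_le_sub_mul {g : ℝ → ℝ} {a b : ℝ} (hab : a ≤ b)
    (hg : AntitoneOn g (Icc a b)) : ∫ x in a..b, g x ≤ (b - a) * g a :=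
  calc ∫ x in a..b, g x
      ≤ ∫ _ in a..b, g a :=
        intervalIntegral.integral_mono_on hab
          (AntitoneOn.intervalIntegrable (by rwa [uIcc_of_le hab])) intervalIntegrable_const
          fun x hx => hg ⟨le_rfl, hab⟩ hx hx.1
    _ = (b - a) * g a := by simp

theorem Monotone.intervalIntegral_le_of_le {g : ℝ → ℝ} (hg : Monotone g) {a a' d : ℝ}
    (ha : a ≤ a') (hd : 0 ≤ d) : ∫ x in a..a + d, g x ≤ ∫ x in a'..a' + d, g x := by
  have hshift := intervalIntegral.integral_comp_add_right g (a' - a) (a := a) (b := a + d)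
  rw [add_sub_cancel, add_right_comm, add_sub_cancel] at hshift
  rw [← hshift]
  exact intervalIntegral.integral_mono_on (by linarith) hg.intervalIntegrable
    (hg.comp (add_left_mono (a := a' - a))).intervalIntegrable fun x _ => hg (by linarith)

theorem integral_le_integral_of_lintegral_ofReal_le {α β : Type*} [MeasurableSpace α]
    [MeasurableSpace β] {μ : Measure α} {ν : Measure β} {f : α → ℝ} {g : β → ℝ}
    (hf : Integrable f μ) (hg : Integrable g ν) (hf₀ : 0 ≤ᵐ[μ] f) (hg₀ : 0 ≤ᵐ[ν] g)
    (h : ∫⁻ x, ENNReal.ofReal (f x) ∂μ ≤ ∫⁻ y, ENNReal.ofReal (g y) ∂ν) :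
    ∫ x, f x ∂μ ≤ ∫ y, g y ∂ν := by
  rwa [← ENNReal.ofReal_le_ofReal_iff (integral_nonneg_of_ae hg₀),
    ofReal_integral_eq_lintegral_ofReal hf hf₀, ofReal_integral_eq_lintegral_ofReal hg hg₀]

theorem setLIntegral_Ioo_ofReal_eq_sub_of_hasDerivAt {g g' : ℝ → ℝ} {a b : ℝ} (hab : a ≤ b)
    (hcont : ContinuousOn g (Icc a b)) (hderiv : ∀ x ∈ Ioo a b, HasDerivAt g (g' x) x)
    (hpos : ∀ x ∈ Ioo a b, 0 ≤ g' x) :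
    ∫⁻ x in Ioo a b, ENNReal.ofReal (g' x) = ENNReal.ofReal (g b - g a) := by
  have hint := intervalIntegral.integrableOn_deriv_of_nonneg hcont hderiv hpos
  rw [← ofReal_integral_eq_lintegral_ofReal (hint.mono_set Ioo_subset_Ioc_self)
    ((ae_restrict_iff' measurableSet_Ioo).2 (Eventually.of_forall hpos)),
    ← integral_Ioc_eq_integral_Ioo, ← intervalIntegral.integral_of_le hab,
    intervalIntegral.integral_eq_sub_of_hasDerivAt_of_le hab hcont hderiv
      ((intervalIntegrable_iff_integrableOn_Ioc_of_le hab).2 hint)]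

theorem aemeasurable_uncurry_of_hasDerivAt {F f : ℝ → ℝ → ℝ} {u₀ u₁ x₀ x₁ : ℝ}
    (hu : u₀ ≤ u₁) (hx : x₀ ≤ x₁) (hF : ContinuousOn (uncurry F) (Icc u₀ u₁ ×ˢ Icc x₀ x₁))
    (hf : ∀ u ∈ Ioo u₀ u₁, ∀ t ∈ Ioo x₀ x₁, HasDerivAt (F u) (f u t) t) :
    AEMeasurable (uncurry f) ((volume.prod volume).restrict (Ioo u₀ u₁ ×ˢ Ioo x₀ x₁)) := by
  set G : ℝ → ℝ → ℝ := fun u t => F (projIcc u₀ u₁ hu u) (projIcc x₀ x₁ hx t)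
  have hG : Continuous (uncurry G) :=
    hF.comp_continuous
      (f := fun p : ℝ × ℝ => ((projIcc u₀ u₁ hu p.1 : ℝ), (projIcc x₀ x₁ hx p.2 : ℝ)))
      (by fun_prop) fun p => ⟨(projIcc u₀ u₁ hu p.1).2, (projIcc x₀ x₁ hx p.2).2⟩
  refine (measurable_deriv_with_param hG).aemeasurable.congr ?_
  filter_upwards [ae_restrict_mem (measurableSet_Ioo.prod measurableSet_Ioo)]
    with p ⟨hp₁, hp₂⟩
  have hGF : G p.1 =ᶠ[𝓝 p.2] F p.1 := by
    filter_upwards [isOpen_Ioo.mem_nhds hp₂] with t ht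
    simp only [G, projIcc_of_mem _ (Ioo_subset_Icc_self hp₁),
      projIcc_of_mem _ (Ioo_subset_Icc_self ht)]
  exact hGF.deriv_eq.trans (hf p.1 hp₁ p.2 hp₂).deriv

theorem lintegral_lintegral_swap_triangle {g : ℝ → ℝ → ℝ≥0∞} {u₀ u₁ c : ℝ}
    (hg : AEMeasurable (uncurry g)
      ((volume.prod volume).restrict (Ioo u₀ u₁ ×ˢ Ioo (u₀ + c) (u₁ + c)))) :
    ∫⁻ u in Ioo u₀ u₁, ∫⁻ t in Ioo (u₀ + c) (u + c), g u t =
      ∫⁻ t in Ioo (u₀ + c) (u₁ + c), ∫⁻ u in Ioo (t - c) u₁, g u t := by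
  set T : Set (ℝ × ℝ) := {p | p.1 ∈ Ioo u₀ u₁ ∧ p.2 ∈ Ioo (u₀ + c) (p.1 + c)}
  have hT : MeasurableSet T :=
    (measurableSet_Ioo.preimage measurable_fst).inter <|
      (measurableSet_lt measurable_const measurable_snd).inter
        (measurableSet_lt measurable_snd (measurable_fst.add_const c))
  have hT_swap : ∀ u t, (u, t) ∈ T ↔ t ∈ Ioo (u₀ + c) (u₁ + c) ∧ u ∈ Ioo (t - c) u₁ :=
    fun u t => ⟨fun ⟨hu, ht⟩ => ⟨⟨ht.1, by linarith [ht.2, hu.2]⟩, by linarith [ht.2], hu.2⟩,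
      fun ⟨ht, hu⟩ => ⟨⟨by linarith [ht.1, hu.1], hu.2⟩, ht.1, by linarith [hu.1]⟩⟩
  have hT_sub : T ⊆ Ioo u₀ u₁ ×ˢ Ioo (u₀ + c) (u₁ + c) := fun p hp =>
    ⟨hp.1, ((hT_swap p.1 p.2).1 hp).1⟩
  have hslice_u : ∀ u, ∫⁻ t, T.indicator (uncurry g) (u, t) =
      (Ioo u₀ u₁).indicator (fun u => ∫⁻ t in Ioo (u₀ + c) (u + c), g u t) u := by
    intro u
    by_cases hu : u ∈ Ioo u₀ u₁
    · rw [indicator_of_mem hu, ← lintegral_indicator measurableSet_Ioo]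
      congr 1 with t
      simp only [indicator_apply, T, mem_ofPred_eq, hu, true_and, uncurry_apply_pair]
    · have hnot : ∀ t, (u, t) ∉ T := fun t h => hu h.1
      simp [hnot, hu]
  have hslice_t : ∀ t, ∫⁻ u, T.indicator (uncurry g) (u, t) =
      (Ioo (u₀ + c) (u₁ + c)).indicator (fun t => ∫⁻ u in Ioo (t - c) u₁, g u t) t := by
    intro t
    by_cases ht : t ∈ Ioo (u₀ + c) (u₁ + c)
    · rw [indicator_of_mem ht, ← lintegral_indicator measurableSet_Ioo]
      congr 1 with u
      simp only [indicator_apply, hT_swap, ht, true_and, uncurry_apply_pair]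
    · simp [hT_swap, ht]
  have hswap := lintegral_lintegral_swap (f := fun u t => T.indicator (uncurry g) (u, t))
    ((aemeasurable_indicator_iff hT).2 (hg.mono_set hT_sub))
  simp only [hslice_u, hslice_t, lintegral_indicator measurableSet_Ioo] at hswap
  exact hswap

theorem setLIntegral_ofReal_le_of_deriv_add_deriv_nonpos {F f F' : ℝ → ℝ → ℝ} {u₀ u₁ c : ℝ}
    (hu : u₀ ≤ u₁) (hF : ContinuousOn (uncurry F) (Icc u₀ u₁ ×ˢ Icc (u₀ + c) (u₁ + c)))
    (hFt : ∀ u ∈ Ioo u₀ u₁, ∀ t ∈ Ioo (u₀ + c) (u₁ + c), HasDerivAt (F u) (f u t) t)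
    (hFu : ∀ u ∈ Ioo u₀ u₁, ∀ t ∈ Ioo (u₀ + c) (u₁ + c), HasDerivAt (F · t) (F' u t) u)
    (hf : ∀ u ∈ Ioo u₀ u₁, ∀ t ∈ Ioo (u₀ + c) (u₁ + c), 0 ≤ f u t)
    (hsum : ∀ u ∈ Ioo u₀ u₁, ∀ t ∈ Ioo (u₀ + c) (u₁ + c), F' u t + f u t ≤ 0) :
    ∫⁻ u in Ioo u₀ u₁, ENNReal.ofReal (F u (u + c) - F u (u₀ + c)) ≤
      ∫⁻ t in Ioo (u₀ + c) (u₁ + c), ENNReal.ofReal (F (t - c) t - F u₁ t) := by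
  have hslice_t : ∀ u ∈ Ioo u₀ u₁, ∫⁻ t in Ioo (u₀ + c) (u + c), ENNReal.ofReal (f u t) =
      ENNReal.ofReal (F u (u + c) - F u (u₀ + c)) := fun u hu =>
    setLIntegral_Ioo_ofReal_eq_sub_of_hasDerivAt (by linarith [hu.1])
      ((hF.uncurry_left u (Ioo_subset_Icc_self hu)).mono
        (Icc_subset_Icc le_rfl (by linarith [hu.2])))
      (fun t ht => hFt u hu t ⟨ht.1, by linarith [ht.2, hu.2]⟩)
      (fun t ht => hf u hu t ⟨ht.1, by linarith [ht.2, hu.2]⟩)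
  have hslice_u : ∀ t ∈ Ioo (u₀ + c) (u₁ + c), ∫⁻ u in Ioo (t - c) u₁, ENNReal.ofReal (f u t) ≤
      ENNReal.ofReal (F (t - c) t - F u₁ t) := by
    intro t ht
    have hsub : Ioo (t - c) u₁ ⊆ Ioo u₀ u₁ := Ioo_subset_Ioo_left (by linarith [ht.1])
    calc ∫⁻ u in Ioo (t - c) u₁, ENNReal.ofReal (f u t)
        ≤ ∫⁻ u in Ioo (t - c) u₁, ENNReal.ofReal (-F' u t) :=
          setLIntegral_mono' measurableSet_Ioo fun u hu =>
            ENNReal.ofReal_le_ofReal (by linarith [hsum u (hsub hu) t ht])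
      _ = ENNReal.ofReal (-F u₁ t - -F (t - c) t) :=
          setLIntegral_Ioo_ofReal_eq_sub_of_hasDerivAt (g := fun u => -F u t) (by linarith [ht.2])
            ((hF.uncurry_right t (Ioo_subset_Icc_self ht)).neg.mono
              (Icc_subset_Icc (by linarith [ht.1]) le_rfl))
            (fun u hu => (hFu u (hsub hu) t ht).neg)
            (fun u hu => by linarith [hsum u (hsub hu) t ht, hf u (hsub hu) t ht])
      _ = ENNReal.ofReal (F (t - c) t - F u₁ t) := by rw [neg_sub_neg]
  have hmeas : AEMeasurable (uncurry fun u t => ENNReal.ofReal (f u t))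
      ((volume.prod volume).restrict (Ioo u₀ u₁ ×ˢ Ioo (u₀ + c) (u₁ + c))) :=
    ENNReal.measurable_ofReal.comp_aemeasurable
      (aemeasurable_uncurry_of_hasDerivAt hu (by linarith) hF hFt)
  rw [← setLIntegral_congr_fun measurableSet_Ioo hslice_t, lintegral_lintegral_swap_triangle hmeas]
  exact setLIntegral_mono' measurableSet_Ioo hslice_u

theorem intervalIntegral_le_of_deriv_add_deriv_nonpos {F f F' : ℝ → ℝ → ℝ} {u₀ u₁ c : ℝ}
    (hu : u₀ ≤ u₁) (hF : ContinuousOn (uncurry F) (Icc u₀ u₁ ×ˢ Icc (u₀ + c) (u₁ + c)))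
    (hFt : ∀ u ∈ Ioo u₀ u₁, ∀ t ∈ Ioo (u₀ + c) (u₁ + c), HasDerivAt (F u) (f u t) t)
    (hFu : ∀ u ∈ Ioo u₀ u₁, ∀ t ∈ Ioo (u₀ + c) (u₁ + c), HasDerivAt (F · t) (F' u t) u)
    (hf : ∀ u ∈ Ioo u₀ u₁, ∀ t ∈ Ioo (u₀ + c) (u₁ + c), 0 ≤ f u t)
    (hsum : ∀ u ∈ Ioo u₀ u₁, ∀ t ∈ Ioo (u₀ + c) (u₁ + c), F' u t + f u t ≤ 0) :
    ∫ t in (u₀ + c)..(u₁ + c), F u₁ t ≤ ∫ u in u₀..u₁, F u (u₀ + c) := by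
  have hc : u₀ + c ≤ u₁ + c := by linarith
  have hbottom : ContinuousOn (F · (u₀ + c)) (Icc u₀ u₁) :=
    hF.uncurry_right _ (left_mem_Icc.2 hc)
  have hright : ContinuousOn (F u₁) (Icc (u₀ + c) (u₁ + c)) :=
    hF.uncurry_left _ (right_mem_Icc.2 hu)
  have hdiag : ContinuousOn (fun u => F u (u + c)) (Icc u₀ u₁) :=
    hF.comp (f := fun u => (u, u + c)) (by fun_prop) fun u hu =>
      ⟨hu, by linarith [hu.1], by linarith [hu.2]⟩
  have hdiag' : ContinuousOn (fun t => F (t - c) t) (Icc (u₀ + c) (u₁ + c)) :=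
    hF.comp (f := fun t => (t - c, t)) (by fun_prop) fun t ht =>
      ⟨⟨by linarith [ht.1], by linarith [ht.2]⟩, ht⟩
  have hD : ∀ u ∈ Ioo u₀ u₁, 0 ≤ F u (u + c) - F u (u₀ + c) := fun u hu =>
    have hmono := monotoneOn_Icc_of_hasDerivAt_nonneg
      (hF.uncurry_left u (Ioo_subset_Icc_self hu)) (hFt u hu) (hf u hu)
    sub_nonneg.2 <| hmono ⟨le_rfl, hc⟩ ⟨by linarith [hu.1], by linarith [hu.2]⟩
      (by linarith [hu.1])
  have hE : ∀ t ∈ Ioo (u₀ + c) (u₁ + c), 0 ≤ F (t - c) t - F u₁ t := fun t ht =>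
    have hanti := antitoneOn_Icc_of_hasDerivAt_nonpos
      (hF.uncurry_right t (Ioo_subset_Icc_self ht)) (fun u hu => hFu u hu t ht)
      (fun u hu => by linarith [hsum u hu t ht, hf u hu t ht])
    sub_nonneg.2 <| hanti ⟨by linarith [ht.1], by linarith [ht.2]⟩ ⟨hu, le_rfl⟩
      (by linarith [ht.2])
  have hDE : ∫ u in u₀..u₁, (F u (u + c) - F u (u₀ + c)) ≤
      ∫ t in (u₀ + c)..(u₁ + c), (F (t - c) t - F u₁ t) := by
    rw [intervalIntegral.integral_of_le hu, intervalIntegral.integral_of_le hc,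
      integral_Ioc_eq_integral_Ioo, integral_Ioc_eq_integral_Ioo]
    exact integral_le_integral_of_lintegral_ofReal_le
      ((hdiag.sub hbottom).integrableOn_Icc.mono_set Ioo_subset_Icc_self)
      ((hdiag'.sub hright).integrableOn_Icc.mono_set Ioo_subset_Icc_self)
      ((ae_restrict_iff' measurableSet_Ioo).2 (Eventually.of_forall hD))
      ((ae_restrict_iff' measurableSet_Ioo).2 (Eventually.of_forall hE))
      (setLIntegral_ofReal_le_of_deriv_add_deriv_nonpos hu hF hFt hFu hf hsum)
  have hshift : ∫ u in u₀..u₁, F u (u + c) = ∫ t in (u₀ + c)..(u₁ + c), F (t - c) t := by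
    simpa only [add_sub_cancel_right] using
      intervalIntegral.integral_comp_add_right (fun t => F (t - c) t) c
  rw [intervalIntegral.integral_sub (hdiag.intervalIntegrable_of_Icc hu)
      (hbottom.intervalIntegrable_of_Icc hu),
    intervalIntegral.integral_sub (hdiag'.intervalIntegrable_of_Icc hc)
      (hright.intervalIntegrable_of_Icc hc), hshift] at hDE
  linarith

theorem intervalIntegral_le_mul_of_deriv_add_deriv_nonpos {F f F' : ℝ → ℝ → ℝ}
    {a b c d u₀ u₁ x₀ : ℝ} (ha : a < u₀) (hu : u₀ ≤ u₁) (hb : u₁ < b) (hc : c < x₀)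
    (hd : x₀ + (u₁ - u₀) < d) (hF : ContinuousOn (uncurry F) (Ioo a b ×ˢ Ioo c d))
    (hFt : ∀ u ∈ Ioo a b, ∀ t ∈ Ioo c d, HasDerivAt (F u) (f u t) t)
    (hFu : ∀ u ∈ Ioo a b, ∀ t ∈ Ioo c d, HasDerivAt (F · t) (F' u t) u)
    (hf : ∀ u ∈ Ioo a b, ∀ t ∈ Ioo c d, 0 ≤ f u t)
    (hsum : ∀ u ∈ Ioo a b, ∀ t ∈ Ioo c d, F' u t + f u t ≤ 0) :
    ∫ t in x₀..x₀ + (u₁ - u₀), F u₁ t ≤ (u₁ - u₀) * F u₀ x₀ := by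
  have hrect : Icc u₀ u₁ ×ˢ Icc (u₀ + (x₀ - u₀)) (u₁ + (x₀ - u₀)) ⊆ Ioo a b ×ˢ Ioo c d :=
    fun p ⟨hu, ht⟩ => ⟨⟨by linarith [hu.1], by linarith [hu.2]⟩, by linarith [ht.1],
      by linarith [ht.2]⟩
  have hin : ∀ u ∈ Ioo u₀ u₁, ∀ t ∈ Ioo (u₀ + (x₀ - u₀)) (u₁ + (x₀ - u₀)),
      u ∈ Ioo a b ∧ t ∈ Ioo c d := fun u hu t ht =>
    hrect (a := (u, t)) ⟨Ioo_subset_Icc_self hu, Ioo_subset_Icc_self ht⟩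
  have htransport := intervalIntegral_le_of_deriv_add_deriv_nonpos hu (hF.mono hrect)
    (fun u hu t ht => hFt u (hin u hu t ht).1 t (hin u hu t ht).2)
    (fun u hu t ht => hFu u (hin u hu t ht).1 t (hin u hu t ht).2)
    (fun u hu t ht => hf u (hin u hu t ht).1 t (hin u hu t ht).2)
    (fun u hu t ht => hsum u (hin u hu t ht).1 t (hin u hu t ht).2)
  rw [add_sub_cancel, show u₁ + (x₀ - u₀) = x₀ + (u₁ - u₀) by ring] at htransport
  have hx₀ : x₀ ∈ Ioo c d := ⟨hc, by linarith⟩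
  have hsub : Icc u₀ u₁ ⊆ Ioo a b := Icc_subset_Ioo ha hb
  refine htransport.trans (AntitoneOn.intervalIntegral_le_sub_mul hu ?_)
  exact antitoneOn_Icc_of_hasDerivAt_nonpos
    (fun u hu => (hFu u (hsub hu) x₀ hx₀).continuousAt.continuousWithinAt)
    (fun u hu => hFu u (hsub (Ioo_subset_Icc_self hu)) x₀ hx₀)
    fun u hu => by
      have hu' := hsub (Ioo_subset_Icc_self hu)
      linarith [hsum u hu' x₀ hx₀, hf u hu' x₀ hx₀]

theorem stmt_5_general
    (Vlo V0 a b : ℝ) (hab : a < b) (hsmall : b - a < V0 - Vlo)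
    (H h Hv : ℝ → ℝ → ℝ)
    (hH_cont : ∀ v ∈ Icc a b, Continuous (H v))
    (hH_mono : ∀ v ∈ Icc a b, Monotone (H v))
    (hzero : ∀ v ∈ Icc a b, ∀ x : ℝ, x ≤ Vlo → H v x = 0)
    (hpos : ∀ v ∈ Icc a b, ∀ x : ℝ, Vlo < x → 0 < H v x)
    (hcdf : ∀ v ∈ Icc a b, ∀ x ∈ Ioo Vlo V0, H v x = ∫ t in Ioc Vlo x, h v t)
    (hh_cont : ∀ v ∈ Icc a b, ContinuousOn (h v) (Ioo Vlo V0))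
    (hh_pos : ∀ v ∈ Icc a b, ∀ V ∈ Ioo Vlo V0, 0 < h v V)
    (hH_deriv : ∀ V ∈ Ioo Vlo V0, ∀ v ∈ Ioo a b, HasDerivAt (fun v => H v V) (Hv v V) v) :
    ¬ (∀ v ∈ Ioo a b, ∀ V ∈ Ioo Vlo V0, Hv v V + h v V < 0) := by
  intro hneg
  obtain ⟨v₁, hav₁, hv₁b⟩ := exists_between hab
  obtain ⟨v₂, hv₁₂, hv₂b⟩ := exists_between hv₁b
  have hv₁ : v₁ ∈ Icc a b := ⟨hav₁.le, hv₁b.le⟩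
  have hv₂ : v₂ ∈ Icc a b := ⟨(hav₁.trans hv₁₂).le, hv₂b.le⟩
  -- `H v x > 0` forces integrability: a non-integrable function has integral `0`.
  have hHx : ∀ v ∈ Ioo a b, ∀ x ∈ Ioo Vlo V0, HasDerivAt (H v) (h v x) x := fun v hv x hx =>
    have hv := Ioo_subset_Icc_self hv
    hasDerivAt_of_eq_setIntegral_Ioc (hcdf v hv) (Integrable.of_integral_ne_zero
      (hcdf v hv x hx ▸ (hpos v hv x hx.1).ne')) (hh_cont v hv) hx
  have hH_joint : ContinuousOn (uncurry H) (Ioo a b ×ˢ Ioo Vlo V0) := fun p ⟨hv, hx⟩ =>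
    (continuousAt_uncurry_of_monotone
      (eventually_of_mem (isOpen_Ioo.mem_nhds hv) fun u hu => hH_mono u (Ioo_subset_Icc_self hu))
      (hH_cont p.1 (Ioo_subset_Icc_self hv)).continuousAt
      (eventually_of_mem (isOpen_Ioo.mem_nhds hx) fun y hy => (hH_deriv y hy p.1 hv).continuousAt)
      ).continuousWithinAt
  set I := ∫ t in Vlo..Vlo + (v₂ - v₁), H v₂ t
  have hI : 0 < I := intervalIntegral.intervalIntegral_pos_of_pos_on
    ((hH_cont v₂ hv₂).intervalIntegrable _ _) (fun t ht => hpos v₂ hv₂ t ht.1) (by linarith)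
  obtain ⟨A, ⟨hA₀, hA₁⟩, hHA⟩ : ∃ A ∈ Ioo Vlo (V0 - (v₂ - v₁)), (v₂ - v₁) * H v₁ A < I := by
    have hlim : Tendsto (fun x => (v₂ - v₁) * H v₁ x) (𝓝 Vlo) (𝓝 0) := by
      simpa [hzero v₁ hv₁ Vlo le_rfl] using ((hH_cont v₁ hv₁).tendsto Vlo).const_mul (v₂ - v₁)
    exact ((eventually_mem_set.2 (Ioo_mem_nhdsGT (by linarith))).and
      (nhdsWithin_le_nhds (hlim.eventually_lt_const hI))).exists
  have hupper := intervalIntegral_le_mul_of_deriv_add_deriv_nonpos hav₁ hv₁₂.le hv₂b hA₀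
    (by linarith) hH_joint hHx (fun u hu t ht => hH_deriv t ht u hu)
    (fun u hu t ht => (hh_pos u (Ioo_subset_Icc_self hu) t ht).le)
    (fun u hu t ht => (hneg u hu t ht).le)
  have hlower : I ≤ ∫ t in A..A + (v₂ - v₁), H v₂ t :=
    (hH_mono v₂ hv₂).intervalIntegral_le_of_le hA₀.le (by linarith)
  linarith

/-- **Corner lemma for Proposition 2.**
Let `Vlo < V0` and `a < b` with `b - a < V0 - Vlo`.  Suppose for each `v ∈ [a, b]`,
`H v : ℝ → ℝ` is a continuous weakly increasing function with `H v x = 0` for `x ≤ Vlo`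
and `H v x > 0` for `x > Vlo`, such that `H v x = ∫_{Vlo}^{x} h v` on `(Vlo, V0)` where
`h v` is continuous and strictly positive on `(Vlo, V0)`, and for each fixed
`V ∈ (Vlo, V0)` the map `v ↦ H v V` is continuously differentiable on `(a, b)` with
derivative `Hv v V`.  Then it cannot hold that `∂H_v(V)/∂v + h_v(V) < 0` for all
`v ∈ (a, b)` and all `V ∈ (Vlo, V0)`; that is, no such family with
`-(∂H_v(V)/∂v)/h_v(V) > 1` throughout this region exists. -/
theorem stmt_5
    (Vlo V0 a b : ℝ) (hV : Vlo < V0) (hab : a < b) (hsmall : b - a < V0 - Vlo)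
    (H h Hv : ℝ → ℝ → ℝ)
    (hH_cont : ∀ v ∈ Icc a b, Continuous (H v))
    (hH_mono : ∀ v ∈ Icc a b, Monotone (H v))
    (hzero : ∀ v ∈ Icc a b, ∀ x : ℝ, x ≤ Vlo → H v x = 0)
    (hpos : ∀ v ∈ Icc a b, ∀ x : ℝ, Vlo < x → 0 < H v x)
    (hcdf : ∀ v ∈ Icc a b, ∀ x ∈ Ioo Vlo V0, H v x = ∫ t in Ioc Vlo x, h v t)
    (hh_cont : ∀ v ∈ Icc a b, ContinuousOn (h v) (Ioo Vlo V0))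
    (hh_pos : ∀ v ∈ Icc a b, ∀ V ∈ Ioo Vlo V0, 0 < h v V)
    (hH_deriv : ∀ V ∈ Ioo Vlo V0, ∀ v ∈ Ioo a b, HasDerivAt (fun v => H v V) (Hv v V) v)
    (hHv_cont : ∀ V ∈ Ioo Vlo V0, ContinuousOn (fun v => Hv v V) (Ioo a b)) :
    ¬ (∀ v ∈ Ioo a b, ∀ V ∈ Ioo Vlo V0, Hv v V + h v V < 0) :=
  stmt_5_general Vlo V0 a b hab hsmall H h Hv hH_cont hH_mono hzero hpos hcdf hh_cont hh_pos
    hH_deriv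
end
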